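/- arXiv:1609.08739 — 6 statements merged into one kernel-verified Lean document; each statement's English description precedes it below -/
import Mathlib

section
/- Let b be the origin in R^d, and let p, q be unit vectors with α = ∠(q, p) ≤ π/2 and β = ∠(q, p') ≤ π/2 for unit vectors p, p', where α ≤ β and ‖q - p'‖ ≤ (1+ε)‖q - p‖. Let e' be the closest point to q on the segment [0, p] and a' the closest point to q on the segment [0, p']. Then ‖q - a'‖ ≤ (1+ε)‖q - e'‖. -/
open InnerProductGeometry Real Metric

lemma seg_dist_sq {d : ℕ} (p q e : EuclideanSpace ℝ (Fin d))
    (hpu : ‖p‖ = 1) (hqu : ‖q‖ = 1)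
    (hmem : e ∈ segment ℝ (0 : EuclideanSpace ℝ (Fin d)) p)
    (he : dist q e = infDist q (segment ℝ (0 : EuclideanSpace ℝ (Fin d)) p))
    (hc0 : 0 ≤ (inner ℝ q p : ℝ)) (hc1 : (inner ℝ q p : ℝ) ≤ 1) :
    ‖q - e‖ ^ 2 = 1 - (inner ℝ q p : ℝ) ^ 2 := by
  set c : ℝ := inner ℝ q p with hc
  have hdist : ∀ t : ℝ, ‖q - t • p‖ ^ 2 = 1 - 2 * t * c + t ^ 2 := by
    intro t
    have := norm_sub_sq_real q (t • p)
    rw [inner_smul_right, norm_smul] at this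
    simp only [hqu, hpu, Real.norm_eq_abs] at this
    rw [this, mul_one, sq_abs]; ring
  -- lower bound
  obtain ⟨t, ht, hte⟩ : ∃ t, t ∈ Set.Icc (0:ℝ) 1 ∧ t • p = e := by
    rw [segment_eq_image] at hmem
    obtain ⟨t, ht, hte⟩ := hmem
    exact ⟨t, ht, by simpa using hte⟩
  have hlow : 1 - c ^ 2 ≤ ‖q - e‖ ^ 2 := by
    rw [← hte, hdist t]; nlinarith [sq_nonneg (t - c)]
  -- upper bound
  have hmem' : c • p ∈ segment ℝ (0 : EuclideanSpace ℝ (Fin d)) p := by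
    rw [segment_eq_image]
    exact ⟨c, ⟨hc0, hc1⟩, by simp⟩
  have hup : dist q e ≤ dist q (c • p) := he ▸ infDist_le_dist_of_mem hmem'
  have h2 : ‖q - c • p‖ ^ 2 = 1 - c ^ 2 := by rw [hdist c]; ring
  rw [dist_eq_norm, dist_eq_norm] at hup
  have := pow_le_pow_left₀ (norm_nonneg _) hup 2
  nlinarith [norm_nonneg (q - e)]

set_option maxHeartbeats 1000000 in
/-- with `b` the origin, unit vectors `p, p', q`, angles
`α = ∠(q,p) ≤ π/2`, `β = ∠(q,p') ≤ π/2`, `α ≤ β` and `‖q - p'‖ ≤ (1+ε)‖q - p‖`,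
if `e'` is the closest point to `q` on the segment `[0, p]` and `a'` the closest
point to `q` on `[0, p']`, then `‖q - a'‖ ≤ (1+ε) ‖q - e'‖`. -/
theorem stmt_1 (d : ℕ) (p p' q e' a' : EuclideanSpace ℝ (Fin d)) (ε : ℝ) (hε : 0 ≤ ε)
    (hpu : ‖p‖ = 1) (hp'u : ‖p'‖ = 1) (hqu : ‖q‖ = 1)
    (hα : InnerProductGeometry.angle q p ≤ π / 2)
    (hβ : InnerProductGeometry.angle q p' ≤ π / 2)
    (hαβ : InnerProductGeometry.angle q p ≤ InnerProductGeometry.angle q p')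
    (hnear : ‖q - p'‖ ≤ (1 + ε) * ‖q - p‖)
    (he'mem : e' ∈ segment ℝ (0 : EuclideanSpace ℝ (Fin d)) p)
    (he' : dist q e' = infDist q (segment ℝ (0 : EuclideanSpace ℝ (Fin d)) p))
    (ha'mem : a' ∈ segment ℝ (0 : EuclideanSpace ℝ (Fin d)) p')
    (ha' : dist q a' = infDist q (segment ℝ (0 : EuclideanSpace ℝ (Fin d)) p')) :
    ‖q - a'‖ ≤ (1 + ε) * ‖q - e'‖ := by
  set c : ℝ := inner ℝ q p with hc
  set c' : ℝ := inner ℝ q p' with hc'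
  have hcos : c = Real.cos (angle q p) := by
    rw [hc]
    have := InnerProductGeometry.cos_angle q p
    rw [hpu, hqu] at this; rw [this]; ring
  have hcos' : c' = Real.cos (angle q p') := by
    rw [hc']
    have := InnerProductGeometry.cos_angle q p'
    rw [hp'u, hqu] at this; rw [this]; ring
  have hc0 : 0 ≤ c := by
    rw [hcos]
    exact Real.cos_nonneg_of_mem_Icc ⟨by linarith [angle_nonneg q p, Real.pi_pos], hα⟩
  have hc'0 : 0 ≤ c' := by
    rw [hcos']
    exact Real.cos_nonneg_of_mem_Icc ⟨by linarith [angle_nonneg q p', Real.pi_pos], hβ⟩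
  have hc1 : c ≤ 1 := by
    calc c ≤ ‖q‖ * ‖p‖ := real_inner_le_norm q p
    _ = 1 := by rw [hpu, hqu]; ring
  have hc'1 : c' ≤ 1 := by
    calc c' ≤ ‖q‖ * ‖p'‖ := real_inner_le_norm q p'
    _ = 1 := by rw [hp'u, hqu]; ring
  have hcc : c' ≤ c := by
    rw [hcos, hcos']
    exact Real.cos_le_cos_of_nonneg_of_le_pi (angle_nonneg q p) (angle_le_pi q p') hαβ
  have he2 : ‖q - e'‖ ^ 2 = 1 - c ^ 2 := seg_dist_sq p q e' hpu hqu he'mem he' hc0 hc1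
  have ha2 : ‖q - a'‖ ^ 2 = 1 - c' ^ 2 := seg_dist_sq p' q a' hp'u hqu ha'mem ha' hc'0 hc'1
  have hnp : ‖q - p‖ ^ 2 = 2 - 2 * c := by
    have := norm_sub_sq_real q p; rw [hpu, hqu] at this; rw [this, ← hc]; ring
  have hnp' : ‖q - p'‖ ^ 2 = 2 - 2 * c' := by
    have := norm_sub_sq_real q p'; rw [hp'u, hqu] at this; rw [this, ← hc']; ring
  have hnear2 : ‖q - p'‖ ^ 2 ≤ (1 + ε) ^ 2 * ‖q - p‖ ^ 2 := by
    nlinarith [norm_nonneg (q - p'), norm_nonneg (q - p)]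
  have hkey : ‖q - a'‖ ^ 2 ≤ (1 + ε) ^ 2 * ‖q - e'‖ ^ 2 := by
    rw [he2, ha2]
    have h1 : 1 - c' ≤ (1 + ε) ^ 2 * (1 - c) := by nlinarith [hnear2]
    nlinarith [mul_le_mul_of_nonneg_right h1 (by linarith : (0:ℝ) ≤ 1 + c'),
      mul_le_mul_of_nonneg_left hcc (mul_nonneg (sq_nonneg (1 + ε)) (by linarith : (0:ℝ) ≤ 1 - c))]
  exact (pow_le_pow_iff_left₀ (norm_nonneg _)
    (mul_nonneg (by linarith) (norm_nonneg _)) two_ne_zero).mp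
    (by nlinarith [hkey] : ‖q - a'‖ ^ 2 ≤ ((1 + ε) * ‖q - e'‖) ^ 2)
end

section
/- Let F ⊆ H be affine subspaces of R^d with a base point b ∈ F, and let F⊥ be the affine subspace through b orthogonal to F (the orthogonal complement affine subspace). For any point q ∈ R^d, let q⊥ be the orthogonal projection of q onto F⊥. Then dist(q, H) = dist(q⊥, proj_{F⊥}(H)), where proj_{F⊥}(H) denotes the image of H under orthogonal projection onto F⊥. -/
open Metric

/-! Projecting onto `F⊥` only forgets the component of `q - x` along `F.direction`, so it cannot
increase distances. Conversely, since `F.direction ≤ H.direction`, each `x ∈ H` can be moved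
inside `H` by that very component, which yields a point of `H` whose distance to `q` equals the
distance between the projections of `q` and `x`. -/

theorem Metric.infDist_image_eq_of_forall_dist_le {α β : Type*} [PseudoMetricSpace α]
    [PseudoMetricSpace β] {f : α → β} {s : Set α} {q : α}
    (hf : ∀ x ∈ s, dist (f q) (f x) ≤ dist q x)
    (hs : ∀ x ∈ s, ∃ y ∈ s, dist q y ≤ dist (f q) (f x)) :
    infDist q s = infDist (f q) (f '' s) := by
  rcases s.eq_empty_or_nonempty with rfl | hne
  · simp
  apply le_antisymm
  · refine (le_infDist (hne.image f)).2 ?_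
    rintro _ ⟨x, hx, rfl⟩
    obtain ⟨y, hy, hyx⟩ := hs x hx
    exact (infDist_le_dist_of_mem hy).trans hyx
  · refine (le_infDist hne).2 fun x hx => ?_
    exact (infDist_le_dist_of_mem (Set.mem_image_of_mem f hx)).trans (hf x hx)

namespace Submodule

variable {E : Type*} [NormedAddCommGroup E] [InnerProductSpace ℝ E]
  (K : Submodule ℝ E) [K.HasOrthogonalProjection]

theorem dist_add_orthogonalProjectionOnto_sub (b x y : E) :
    dist (b + (K.orthogonalProjectionOnto (x - b) : E))
        (b + (K.orthogonalProjectionOnto (y - b) : E)) =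
      ‖(K.orthogonalProjectionOnto (x - y) : E)‖ := by
  rw [dist_eq_norm, add_sub_add_left_eq_sub, ← Submodule.coe_sub, ← map_sub,
    sub_sub_sub_cancel_right]

theorem exists_mem_dist_eq_norm_orthogonalProjectionOnto_orthogonal {H : AffineSubspace ℝ E}
    (hK : K ≤ H.direction) {x : E} (hx : x ∈ H) (q : E) :
    ∃ y ∈ H, dist q y = ‖(Kᗮ.orthogonalProjectionOnto (q - x) : E)‖ := by
  refine ⟨K.starProjection (q - x) +ᵥ x,
    H.vadd_mem_of_mem_direction (hK (K.orthogonalProjectionOnto (q - x)).2) hx, ?_⟩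
  rw [orthogonalProjectionOnto_orthogonal, dist_eq_norm, vadd_eq_add, coe_mk,
    sub_add_eq_sub_sub_swap]

end Submodule

theorem stmt_2_general (d : ℕ) (F H : AffineSubspace ℝ (EuclideanSpace ℝ (Fin d)))
    (hFH : F ≤ H) (b : EuclideanSpace ℝ (Fin d))
    (projFperp : EuclideanSpace ℝ (Fin d) → EuclideanSpace ℝ (Fin d))
    (hproj : ∀ x, projFperp x = b + (Submodule.orthogonalProjectionOnto F.directionᗮ (x - b) : EuclideanSpace ℝ (Fin d)))
    (q : EuclideanSpace ℝ (Fin d)) :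
    infDist q (H : Set (EuclideanSpace ℝ (Fin d))) =
      infDist (projFperp q) (projFperp '' (H : Set (EuclideanSpace ℝ (Fin d)))) := by
  have hdist : ∀ x, dist (projFperp q) (projFperp x)
      = ‖(F.directionᗮ.orthogonalProjectionOnto (q - x) : EuclideanSpace ℝ (Fin d))‖ := fun x => by
    rw [hproj, hproj, Submodule.dist_add_orthogonalProjectionOnto_sub]
  refine infDist_image_eq_of_forall_dist_le (fun x _ => ?_) (fun x hx => ?_)
  · rw [hdist, dist_eq_norm]
    exact F.directionᗮ.norm_orthogonalProjectionOnto_apply_le _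
  · obtain ⟨y, hy, hqy⟩ := F.direction.exists_mem_dist_eq_norm_orthogonalProjectionOnto_orthogonal
      (AffineSubspace.direction_le hFH) hx q
    exact ⟨y, hy, (hqy.trans (hdist x).symm).le⟩

/-- for affine subspaces `F ≤ H` of `ℝ^d` with base point `b ∈ F`,
letting `F⊥` be the affine subspace through `b` orthogonal to `F`, and `q⊥` the
orthogonal projection of `q` onto `F⊥`, we have
`dist(q, H) = dist(q⊥, proj_{F⊥}(H))`. -/
theorem stmt_2 (d : ℕ) (F H : AffineSubspace ℝ (EuclideanSpace ℝ (Fin d)))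
    (hFH : F ≤ H) (b : EuclideanSpace ℝ (Fin d)) (hb : b ∈ F)
    (projFperp : EuclideanSpace ℝ (Fin d) → EuclideanSpace ℝ (Fin d))
    (hproj : ∀ x, projFperp x = b + (Submodule.orthogonalProjectionOnto F.directionᗮ (x - b) : EuclideanSpace ℝ (Fin d)))
    (q : EuclideanSpace ℝ (Fin d)) :
    infDist q (H : Set (EuclideanSpace ℝ (Fin d))) =
      infDist (projFperp q) (projFperp '' (H : Set (EuclideanSpace ℝ (Fin d)))) :=
  stmt_2_general d F H hFH b projFperp hproj q
end

section
/- Let q, p, u be points in R^d with r = ‖q - p‖ and ‖u - q‖ ≥ r. Let f(u) = dist(q, segment[p, u]) and g(u) = ‖ref(p) - proj(u)‖, where proj(u) is the intersection of the ray from q through u with the sphere S(q, r), and ref(p) = 2q - p (the reflection of p through q, which lies on S(q,r)). Then f(u) ≤ g(u) ≤ 2 f(u). -/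
open Metric

lemma stmt9_comb_sq {E : Type*} [NormedAddCommGroup E] [InnerProductSpace ℝ E]
    (a b : E) (s t : ℝ) :
    ‖s•a + t•b‖^2 = s^2*‖a‖^2 + 2*s*t*(inner ℝ a b : ℝ) + t^2*‖b‖^2 := by
  rw [norm_add_sq_real, real_inner_smul_left, real_inner_smul_right,
    norm_smul, norm_smul]
  simp [mul_pow, sq_abs]
  ring

lemma stmt9_ineq2 (r R ι t : ℝ) (hrpos : 0 < r) (hu : r ≤ R) (h1 : ι ≤ r*R) (h2 : -(r*R) ≤ ι)
    (ht : 0 ≤ t) (ht1 : t ≤ 1) :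
    2*r^2*R + 2*r*ι ≤ 4*((1-t)^2*r^2 + 2*(1-t)*t*ι + t^2*R^2)*R := by
  have hR : 0 < R := lt_of_lt_of_le hrpos hu
  have hD0 : (0:ℝ) ≤ r^2+R^2-2*ι := by nlinarith [sq_nonneg (R-r)]
  rcases eq_or_lt_of_le hD0 with hD | hD
  · have hsq : (R-r)^2 ≤ 0 := by nlinarith
    have hRr : R = r := by nlinarith [sq_nonneg (R-r)]
    have hι : ι = r^2 := by nlinarith
    subst hRr; rw [hι]; nlinarith [sq_nonneg (1-2*t)]
  · rcases le_or_gt ι (r^2) with hca | hca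
    · nlinarith [mul_nonneg hR.le (sq_nonneg (t*(r^2+R^2-2*ι) - (r^2-ι))),
        mul_nonneg (mul_nonneg (sub_nonneg.2 hu) (by linarith : (0:ℝ) ≤ r*R+ι))
          (by nlinarith : (0:ℝ) ≤ r*R+r^2-2*ι),
        hD.le]
    · nlinarith [mul_nonneg (mul_nonneg (sub_nonneg.2 ht1) ht) (by linarith : (0:ℝ) ≤ ι - r^2),
        mul_nonneg (mul_nonneg ht ht) (by nlinarith : (0:ℝ) ≤ R^2 - r^2),
        mul_nonneg hrpos.le (by linarith : (0:ℝ) ≤ r*R - ι)]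

lemma stmt9_exists_t (r R ι : ℝ) (hrpos : 0 < r) (hu : r ≤ R) (h1 : ι ≤ r*R) (h2 : -(r*R) ≤ ι) :
    ∃ t, 0 ≤ t ∧ t ≤ 1 ∧ ((1-t)^2*r^2 + 2*(1-t)*t*ι + t^2*R^2) ≤ 2*r^2 + 2*r*ι/R := by
  have hR : 0 < R := lt_of_lt_of_le hrpos hu
  rcases le_or_gt (-(r*R)/2) ι with hc | hc
  · refine ⟨0, le_refl _, zero_le_one, ?_⟩
    have : -(r^2) ≤ 2*r*ι/R := by
      rw [le_div_iff₀ hR]; nlinarith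
    nlinarith
  · have hιneg : ι < 0 := by nlinarith
    have hD : 0 < r^2+R^2-2*ι := by nlinarith
    refine ⟨(r^2-ι)/(r^2+R^2-2*ι), div_nonneg (by nlinarith) hD.le, ?_, ?_⟩
    · rw [div_le_one hD]; nlinarith
    · have hQ : ((1-(r^2-ι)/(r^2+R^2-2*ι))^2*r^2
          + 2*(1-(r^2-ι)/(r^2+R^2-2*ι))*((r^2-ι)/(r^2+R^2-2*ι))*ι
          + ((r^2-ι)/(r^2+R^2-2*ι))^2*R^2) * (r^2+R^2-2*ι) = r^2*R^2 - ι^2 := by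
        generalize hDdef : r^2+R^2-2*ι = D at hD ⊢
        field_simp [hD.ne']
        rw [← hDdef]
        ring
      have haux : (0:ℝ) ≤ 2*r^3+r*R^2+ι*(R-4*r) := by
        rcases le_or_gt R (4*r) with hc2 | hc2
        · nlinarith [mul_nonneg (by linarith : (0:ℝ) ≤ r*R-ι) (by linarith : (0:ℝ) ≤ 4*r-R),
            mul_nonneg hrpos.le (sq_nonneg (R-r))]
        · nlinarith [mul_nonneg (by linarith : (0:ℝ) ≤ r*R+ι) (by linarith : (0:ℝ) ≤ R-4*r),
            mul_pos (mul_pos hrpos hrpos) hrpos, mul_pos (mul_pos hrpos hrpos) hR]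
      have h1' : (r^2*R^2 - ι^2)*R ≤ (2*r^2*R + 2*r*ι)*(r^2+R^2-2*ι) := by
        nlinarith [mul_nonneg (by linarith : (0:ℝ) ≤ r*R+ι) haux]
      have hrw : 2*r^2 + 2*r*ι/R = (2*r^2*R + 2*r*ι)/R := by field_simp
      rw [hrw, le_div_iff₀ hR]
      refine le_of_mul_le_mul_right ?_ hD
      calc _ = (((1-(r^2-ι)/(r^2+R^2-2*ι))^2*r^2
              + 2*(1-(r^2-ι)/(r^2+R^2-2*ι))*((r^2-ι)/(r^2+R^2-2*ι))*ι
              + ((r^2-ι)/(r^2+R^2-2*ι))^2*R^2) * (r^2+R^2-2*ι)) * R := by ring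
        _ = (r^2*R^2 - ι^2) * R := by rw [hQ]
        _ ≤ (2*r^2*R + 2*r*ι)*(r^2+R^2-2*ι) := h1'

/-- for `q, p, u` in `ℝ^d` with `r = ‖q - p‖ > 0` and `‖u - q‖ ≥ r`,
letting `f(u) = dist(q, segment[p, u])` and `g(u) = ‖ref(p) - proj(u)‖` where
`proj(u) = q + (r/‖u-q‖)(u - q)` and `ref(p) = q - (p - q)`, we have
`f(u) ≤ g(u) ≤ 2 f(u)`. -/
theorem stmt_9 (d : ℕ) (q p u : EuclideanSpace ℝ (Fin d))
    (r : ℝ) (hr : r = ‖q - p‖) (hrpos : 0 < r) (hu : r ≤ ‖u - q‖) :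
    infDist q (segment ℝ p u) ≤ ‖(q - (p - q)) - (q + (r / ‖u - q‖) • (u - q))‖ ∧
      ‖(q - (p - q)) - (q + (r / ‖u - q‖) • (u - q))‖ ≤ 2 * infDist q (segment ℝ p u) := by
  set a : EuclideanSpace ℝ (Fin d) := p - q with ha
  set b : EuclideanSpace ℝ (Fin d) := u - q with hb
  set R : ℝ := ‖u - q‖ with hRdef
  have hR : 0 < R := lt_of_lt_of_le hrpos hu
  set ι : ℝ := (inner ℝ a b : ℝ) with hιdef
  have hra : ‖a‖ = r := by rw [ha, hr, norm_sub_rev]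
  have hcs : |ι| ≤ r * R := by
    rw [hιdef, ← hra]; exact abs_real_inner_le_norm a b
  have hcs1 : ι ≤ r * R := (abs_le.mp hcs).2
  have hcs2 : -(r*R) ≤ ι := (abs_le.mp hcs).1
  set g : ℝ := ‖(q - (p - q)) - (q + (r / ‖u - q‖) • (u - q))‖ with hgdef
  have hgv : (q - (p - q)) - (q + (r / ‖u - q‖) • (u - q)) = -(a + (r/R) • b) := by
    rw [ha, hb, hRdef]; module
  have hg2 : g^2 = 2*r^2 + 2*r*ι/R := by
    rw [hgdef, hgv, norm_neg]
    have := stmt9_comb_sq a b 1 (r/R)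
    simp only [one_smul] at this
    have hrb : ‖b‖ = R := by rw [hb, hRdef]
    rw [this, hra, hrb, ← hιdef]
    field_simp
    ring
  have hdist : ∀ t : ℝ, ‖((1-t)•p + t•u) - q‖^2
      = (1-t)^2*r^2 + 2*(1-t)*t*ι + t^2*R^2 := by
    intro t
    have hx : ((1-t)•p + t•u) - q = (1-t)•a + t•b := by
      rw [ha, hb]; module
    rw [hx, stmt9_comb_sq, hra]
  constructor
  · -- f ≤ g
    obtain ⟨t, ht0, ht1, hQle⟩ := stmt9_exists_t r R ι hrpos hu hcs1 hcs2
    have hmem : ((1-t)•p + t•u) ∈ segment ℝ p u :=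
      ⟨1-t, t, by linarith, ht0, by ring, rfl⟩
    have hfinal : ‖((1-t)•p + t•u) - q‖^2 ≤ g^2 := by
      rw [hdist t, hg2]; exact hQle
    have hle : ‖((1-t)•p + t•u) - q‖ ≤ g :=
      (pow_le_pow_iff_left₀ (norm_nonneg _) (norm_nonneg _) two_ne_zero).mp hfinal
    calc infDist q (segment ℝ p u) ≤ dist q ((1-t)•p + t•u) :=
          infDist_le_dist_of_mem hmem
      _ = ‖((1-t)•p + t•u) - q‖ := by rw [dist_eq_norm, norm_sub_rev]
      _ ≤ g := hle
  · -- g ≤ 2 f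
    have key : g / 2 ≤ infDist q (segment ℝ p u) := by
      by_contra hlt
      push_neg at hlt
      obtain ⟨y, hy, hdy⟩ := (infDist_lt_iff ⟨p, left_mem_segment ℝ p u⟩).mp hlt
      obtain ⟨c, e, hcnn, henn, hce, rfl⟩ := hy
      have hc1 : c = 1 - e := by linarith
      subst hc1
      rw [dist_eq_norm, norm_sub_rev] at hdy
      have hy2 := hdist e
      have hkey := stmt9_ineq2 r R ι e hrpos hu hcs1 hcs2 henn (by linarith)
      have hgle : g^2 ≤ (2*‖(1-e)•p + e•u - q‖)^2 := by
        rw [hg2]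
        have hrw : 2*r^2 + 2*r*ι/R = (2*r^2*R + 2*r*ι)/R := by field_simp
        rw [hrw, div_le_iff₀ hR, mul_pow]
        calc 2*r^2*R + 2*r*ι ≤ 4*((1-e)^2*r^2 + 2*(1-e)*e*ι + e^2*R^2)*R := hkey
          _ = 2^2 * ‖(1-e)•p + e•u - q‖^2 * R := by rw [hy2]; ring
      have hfin := (pow_le_pow_iff_left₀ (by positivity : (0:ℝ) ≤ g)
        (by positivity : (0:ℝ) ≤ 2*‖(1-e)•p + e•u - q‖) two_ne_zero).mp hgle
      linarith
    linarith
end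

section
/- Let c, q ∈ R^d with r = ‖q - c‖ > 0 and let 0 < ε ≤ 1. Let P be a finite set of points contained in the closed ball B(c, r), and let Star = ∪_{p ∈ P} segment[c, p]. If dist(q, Star) ≤ r√ε / 2, then dist(q, P) ≤ (1 + ε/4)·dist(q, Star). -/
/-!
Let `x` be a nearest point of the star to `q`, lying on the segment `[c, p]`. Since the
distance `D` to the star is less than `r`, `x ≠ c`, so either `x = p` or `q - x` is orthogonal
to `[c, p]`. In the latter case `r² = D² + ‖x - c‖²` and
`dist q p² = D² + ‖p - x‖²`, while `‖p - x‖ ≤ r - ‖x - c‖ ≤ D² / r` because `p` lies in the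
ball of radius `r` about `c`. Hence `dist q p² ≤ D² (1 + D² / r²) ≤ D² (1 + ε / 4)`.
-/

open Metric
open scoped InnerProductSpace

section NearestPoint

variable {F : Type*} [NormedAddCommGroup F] [InnerProductSpace ℝ F]

theorem real_inner_sub_nonpos_of_infDist_eq {K : Set F} (hK : Convex ℝ K) {q x w : F}
    (hx : x ∈ K) (hqx : infDist q K = dist q x) (hw : w ∈ K) :
    ⟪q - x, w - x⟫_ℝ ≤ 0 :=
  (norm_eq_iInf_iff_real_inner_le_zero hK hx).1
    (by simpa only [infDist_eq_iInf, dist_eq_norm] using hqx.symm) w hw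

/-- In coordinates `x = c + t • (p - c)`, with `R = ‖q - c‖`, `n = ‖p - c‖`,
`I = ⟪q - c, p - c⟫` and `D = ‖q - x‖`; the two inner product hypotheses are the
optimality of `x` against `c` and against `p`. -/
theorem sq_sub_le_of_nearest_on_segment_coords {R n I t D : ℝ} (ht0 : 0 ≤ t) (ht1 : t ≤ 1)
    (hn : 0 ≤ n) (hnR : n ≤ R) (hD0 : 0 ≤ D) (hDR : D < R)
    (hD : D ^ 2 = R ^ 2 - 2 * t * I + t ^ 2 * n ^ 2)
    (hc : 0 ≤ t * (I - t * n ^ 2)) (hp : (1 - t) * (I - t * n ^ 2) ≤ 0) :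
    R ^ 2 - 2 * I + n ^ 2 ≤ D ^ 2 + (D ^ 2 / R) ^ 2 := by
  have hR : 0 < R := hD0.trans_lt hDR
  have ht : 0 < t := by
    refine ht0.lt_of_ne fun h => ?_
    subst h
    nlinarith
  have hJ : (1 - t) * (I - t * n ^ 2) = 0 :=
    le_antisymm hp (mul_nonneg (by linarith) (nonneg_of_mul_nonneg_right (by linarith) ht))
  have hgap : R ^ 2 - 2 * I + n ^ 2 = D ^ 2 + ((1 - t) * n) ^ 2 := by
    linear_combination -hD - 2 * hJ
  have hshort : (1 - t) * n * R ≤ D ^ 2 := by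
    rcases eq_or_lt_of_le ht1 with rfl | ht1
    · simp only [sub_self, zero_mul]
      positivity
    have hJ0 : I - t * n ^ 2 = 0 := (mul_eq_zero.1 hJ).resolve_left (by linarith)
    have hD' : D ^ 2 = R ^ 2 - t ^ 2 * n ^ 2 := by linear_combination hD - 2 * t * hJ0
    nlinarith [mul_nonneg (sub_nonneg.2 hnR) (by positivity : 0 ≤ R + t * n),
      mul_nonneg (mul_nonneg ht0 (sub_nonneg.2 ht1.le)) (sq_nonneg n)]
  have hdiv : (1 - t) * n ≤ D ^ 2 / R := by rwa [le_div_iff₀ hR]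
  rw [hgap]
  gcongr

theorem dist_sq_le_of_infDist_segment_eq {c p q x : F} (hx : x ∈ segment ℝ c p)
    (hqx : infDist q (segment ℝ c p) = dist q x) (hpc : dist p c ≤ dist q c)
    (hlt : dist q x < dist q c) :
    dist q p ^ 2 ≤ dist q x ^ 2 + (dist q x ^ 2 / dist q c) ^ 2 := by
  have hc := real_inner_sub_nonpos_of_infDist_eq (convex_segment c p) hx hqx
    (left_mem_segment ℝ c p)
  have hp := real_inner_sub_nonpos_of_infDist_eq (convex_segment c p) hx hqx
    (right_mem_segment ℝ c p)
  rw [segment_eq_image'] at hx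
  obtain ⟨t, ⟨ht0, ht1⟩, rfl⟩ := hx
  dsimp only at hlt hc hp ⊢
  have hqx' : q - (c + t • (p - c)) = (q - c) - t • (p - c) := by abel
  have hcx : c - (c + t • (p - c)) = -(t • (p - c)) := by abel
  have hpx : p - (c + t • (p - c)) = (1 - t) • (p - c) := by rw [sub_smul, one_smul]; abel
  have hqp : dist q p = ‖(q - c) - (p - c)‖ := by rw [dist_eq_norm]; congr 1; abel
  rw [hqx', hcx, inner_neg_right, neg_nonpos] at hc
  rw [hqx', hpx] at hp
  rw [hqp]
  simp only [dist_eq_norm, hqx'] at hlt hpc ⊢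
  clear hqx hqx' hcx hpx hqp
  generalize q - c = u at *
  generalize p - c = v at *
  simp only [inner_sub_left, inner_smul_left, inner_smul_right, real_inner_self_eq_norm_sq,
    RCLike.conj_to_real] at hc hp
  refine (norm_sub_sq_real u v).le.trans (sq_sub_le_of_nearest_on_segment_coords ht0 ht1
    (norm_nonneg v) hpc (norm_nonneg _) hlt ?_ (by linarith) (by linarith))
  rw [norm_sub_sq_real, inner_smul_right, norm_smul, Real.norm_eq_abs, abs_of_nonneg ht0]
  ring

end NearestPoint

theorem le_one_add_mul_of_sq_le_sq_add_sq_div {a D r ε : ℝ} (ha : 0 ≤ a) (hD0 : 0 ≤ D)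
    (hr : 0 < r) (hε : 0 ≤ ε) (hD : D ≤ r * Real.sqrt ε / 2)
    (haD : a ^ 2 ≤ D ^ 2 + (D ^ 2 / r) ^ 2) :
    a ≤ (1 + ε / 4) * D := by
  have hD2 : D ^ 2 ≤ r ^ 2 * ε / 4 := calc
    D ^ 2 ≤ (r * Real.sqrt ε / 2) ^ 2 := pow_le_pow_left₀ hD0 hD 2
    _ = r ^ 2 * ε / 4 := by rw [div_pow, mul_pow, Real.sq_sqrt hε]; ring
  have hsmall : (D ^ 2 / r) ^ 2 ≤ ε / 4 * D ^ 2 := by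
    rw [div_pow, div_le_iff₀ (by positivity)]
    nlinarith [mul_le_mul_of_nonneg_left hD2 (sq_nonneg D)]
  refine (pow_le_pow_iff_left₀ ha (by positivity) two_ne_zero).1 ?_
  nlinarith [mul_nonneg hε (sq_nonneg D), mul_nonneg (sq_nonneg ε) (sq_nonneg D)]

section Star

variable {E : Type*} [NormedAddCommGroup E] [NormedSpace ℝ E]

theorem isCompact_segment (c p : E) : IsCompact (segment ℝ c p) :=
  convexHull_pair (𝕜 := ℝ) c p ▸ (Set.toFinite {c, p}).isCompact_convexHull ℝ

theorem exists_mem_segment_infDist_biUnion_segment_eq (c q : E) {P : Finset E}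
    (hP : P.Nonempty) :
    ∃ p ∈ P, ∃ x ∈ segment ℝ c p, infDist q (⋃ p ∈ P, segment ℝ c p) = dist q x ∧
      infDist q (segment ℝ c p) = dist q x := by
  obtain ⟨p₀, hp₀⟩ := hP
  obtain ⟨x, hxStar, hqx⟩ := (P.isCompact_biUnion fun p _ => isCompact_segment c p)
    |>.exists_infDist_eq_dist ⟨c, Set.mem_biUnion hp₀ (left_mem_segment ℝ c p₀)⟩ q
  obtain ⟨p, hpP, hx⟩ := Set.mem_iUnion₂.1 hxStar
  refine ⟨p, hpP, x, hx, hqx, le_antisymm (infDist_le_dist_of_mem hx) ?_⟩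
  exact hqx ▸ infDist_le_infDist_of_subset
    (Set.subset_biUnion_of_mem (u := fun p => segment ℝ c p) hpP) ⟨x, hx⟩

end Star

/-- let `r = ‖q - c‖ > 0`, `0 < ε ≤ 1`, and `P` a finite nonempty set
of points in the closed ball `B(c, r)`.  With `Star = ∪_{p ∈ P} segment[c, p]`,
if `dist(q, Star) ≤ r √ε / 2` then `dist(q, P) ≤ (1 + ε/4) · dist(q, Star)`. -/
theorem stmt_11 (d : ℕ) (c q : EuclideanSpace ℝ (Fin d)) (r ε : ℝ)
    (hr : r = dist q c) (hrpos : 0 < r) (hε0 : 0 < ε) (hε1 : ε ≤ 1)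
    (P : Finset (EuclideanSpace ℝ (Fin d))) (hPne : P.Nonempty)
    (hPball : ∀ p ∈ P, dist p c ≤ r)
    (Star : Set (EuclideanSpace ℝ (Fin d)))
    (hStar : Star = ⋃ p ∈ P, segment ℝ c p)
    (hclose : infDist q Star ≤ r * Real.sqrt ε / 2) :
    infDist q (P : Set (EuclideanSpace ℝ (Fin d))) ≤ (1 + ε / 4) * infDist q Star := by
  subst hStar
  obtain ⟨p, hpP, x, hx, hqx, hqxSeg⟩ := exists_mem_segment_infDist_biUnion_segment_eq c q hPne
  have hDr : infDist q (⋃ p ∈ P, segment ℝ c p) < r := by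
    nlinarith [Real.sqrt_nonneg ε, Real.sqrt_le_one.2 hε1]
  have hqp := dist_sq_le_of_infDist_segment_eq hx hqxSeg (hr ▸ hPball p hpP) (hr ▸ hqx ▸ hDr)
  rw [← hqx, ← hr] at hqp
  exact (infDist_le_dist_of_mem (Finset.mem_coe.2 hpP)).trans
    (le_one_add_mul_of_sq_le_sq_add_sq_div dist_nonneg infDist_nonneg hrpos hε0.le hclose hqp)
end

section
/- Let c, p, q ∈ R^d with ‖c - p‖ ≤ r = ‖c - q‖ and suppose the angle ∠(p c q) = φ ≤ 1/2. Let q' be the nearest point to q on segment[c, p], and suppose q' ≠ p (the nearest point is interior or c). Let β = ∠(q p c). Then β ≥ π/2 − φ/2. -/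
/-!
The angles `γ = ∠ c q p` and `β = ∠ q p c` lie opposite the sides `c p` and `c q`, so
`‖c - p‖ ≤ ‖c - q‖` gives `γ ≤ β`; with `φ + β + γ = π` this yields `2 β ≥ π - φ`.
-/

open Metric EuclideanGeometry Real

namespace EuclideanGeometry

variable {V P : Type*} [NormedAddCommGroup V] [InnerProductSpace ℝ V] [MetricSpace P]
  [NormedAddTorsor V P]

theorem angle_le_angle_of_dist_le {a b c : P} (h : dist a b ≤ dist a c) :
    ∠ a c b ≤ ∠ a b c := by
  rcases eq_or_ne b a with rfl | hba
  · rw [angle_self_left]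
    rcases eq_or_ne c b with rfl | hcb
    · rw [angle_self_left]
    · rw [angle_self_of_ne hcb.symm]
      positivity
  rcases eq_or_ne b c with rfl | hbc
  · exact le_rfl
  have hac : a ≠ c := by
    rintro rfl
    exact hba (dist_le_zero.mp (h.trans_eq (dist_self a))).symm
  by_cases hcol : Collinear ℝ ({a, b, c} : Set P)
  · rcases hcol.wbtw_or_wbtw_or_wbtw with hw | hw | hw
    · rw [Sbtw.angle₁₂₃_eq_pi ⟨hw, hba, hbc⟩]
      exact angle_le_pi a c b
    · have hsplit := hw.dist_add_dist
      rw [dist_comm c a, dist_comm b a] at hsplit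
      exact absurd (dist_le_zero.mp (by linarith)) hbc
    · rw [hw.angle₂₁₃_eq_zero_of_ne hac]
      exact angle_nonneg a b c
  · exact (angle_le_iff_dist_le hcol).2 h

end EuclideanGeometry

theorem stmt_12_general (d : ℕ) (c p q : EuclideanSpace ℝ (Fin d)) (r : ℝ)
    (hr : r = dist c q) (hcp : dist c p ≤ r) (hpc : p ≠ c) :
    π / 2 - ∠ p c q / 2 ≤ ∠ q p c := by
  have hopposite : ∠ c q p ≤ ∠ q p c := by
    rw [angle_comm q p c]
    exact angle_le_angle_of_dist_le (hr ▸ hcp)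
  have hsum := angle_add_angle_add_angle_eq_pi q hpc.symm
  linarith

/-- in a triangle `c, p, q` with `‖c - p‖ ≤ r = ‖c - q‖`, angle
`φ = ∠ p c q ≤ 1/2`, if the nearest point `q'` to `q` on `segment[c, p]` is not
`p`, then the angle `β = ∠ q p c` satisfies `β ≥ π/2 - φ/2`. -/
theorem stmt_12 (d : ℕ) (c p q q' : EuclideanSpace ℝ (Fin d)) (r : ℝ)
    (hr : r = dist c q) (hrpos : 0 < r) (hcp : dist c p ≤ r) (hpc : p ≠ c)
    (hφ : ∠ p c q ≤ 1 / 2)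
    (hq'mem : q' ∈ segment ℝ c p)
    (hq' : dist q q' = infDist q (segment ℝ c p))
    (hq'p : q' ≠ p) :
    π / 2 - ∠ p c q / 2 ≤ ∠ q p c :=
  stmt_12_general d c p q r hr hcp hpc
end

section
/- Let q, p ∈ R^d, and let u ∈ R^d with 0 < ‖u - q‖ < r = ‖q - p‖. Let u'' = q + r(u-q)/‖u-q‖ be the radial projection of u onto the sphere S(q, r). Then dist(q, segment[p, u]) ≤ dist(q, segment[p, u'']). -/
open Metric

/-- for `q, p ∈ ℝ^d` and `u` with `0 < ‖u - q‖ < r = ‖q - p‖`,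
letting `u'' = q + (r/‖u - q‖)(u - q)` be the radial projection of `u` onto the
sphere `S(q, r)`, we have `dist(q, segment[p, u]) ≤ dist(q, segment[p, u''])`. -/
theorem stmt_15 (d : ℕ) (q p u : EuclideanSpace ℝ (Fin d)) (r : ℝ)
    (hr : r = ‖q - p‖) (hu0 : 0 < ‖u - q‖) (hur : ‖u - q‖ < r) :
    infDist q (segment ℝ p u) ≤
      infDist q (segment ℝ p (q + (r / ‖u - q‖) • (u - q))) := by
  set m := ‖u - q‖ with hm
  have hc1 : (1:ℝ) ≤ r / m := (one_le_div hu0).2 hur.le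
  have hne : (segment ℝ p (q + (r / m) • (u - q))).Nonempty :=
    ⟨p, left_mem_segment ℝ _ _⟩
  rw [Metric.infDist_eq_iInf (s := segment ℝ p (q + (r / m) • (u - q)))]
  have : Nonempty ↥(segment ℝ p (q + (r / m) • (u - q))) := hne.to_subtype
  refine le_ciInf fun ⟨x, hx⟩ => ?_
  obtain ⟨α, β, hα, hβ, hαβ, hxe⟩ := hx
  have hden : (1:ℝ) ≤ α + β * (r / m) := by nlinarith
  have hden0 : (0:ℝ) < α + β * (r / m) := by linarith
  set l := (α + β * (r / m))⁻¹ with hl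
  have hl0 : 0 < l := inv_pos.2 hden0
  have hl1 : l ≤ 1 := by rw [hl]; exact inv_le_one_of_one_le₀ hden
  have hls : l * (α + β * (r / m)) = 1 := inv_mul_cancel₀ hden0.ne'
  set y := (l * α) • p + (l * (β * (r / m))) • u with hy
  have hymem : y ∈ segment ℝ p u :=
    ⟨l * α, l * (β * (r / m)), by positivity,
      by positivity, by rw [← mul_add, hls], rfl⟩
  refine le_trans (Metric.infDist_le_dist_of_mem hymem) ?_
  have key : q - y = l • (q - x) := by
    rw [← hxe, hy]
    match_scalars
    · nlinarith [hls]
    · ring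
    · ring
  rw [dist_eq_norm, dist_eq_norm, key, norm_smul, Real.norm_eq_abs,
    abs_of_pos hl0]
  nlinarith [norm_nonneg (q - x)]
end
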